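/- Cross-effect decomposition: For any functor F from finitely generated free B-modules to B-modules with F(0) = 0, and modules M₁,...,M_k, one has F(M₁ ⊕ ⋯ ⊕ M_k) ≅ ⊕_{I ⊆ [k]} cr_I F((M_i)_{i∈I}), where cr_I F(M_i : i ∈ I) = Im F(π_{i₁} | ⋯ | π_{i_r}) is the image of the deviation of the canonical projections π_i : ⊕M_j → ⊕M_j indexed by I = {i₁,...,i_r}. -/

import Mathlib

/-!
Write `π_S = ∑_{i ∈ S} π_i`. The projections are complete orthogonal idempotents, so
`π_S π_{S'} = π_{S ∩ S'}` and `π_{[k]} = 1`; these are multiplicative identities, so they survive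
the non-additive functor `F`: `e_S = F(π_S)` satisfies `e_S e_{S'} = e_{S ∩ S'}` and `e_{[k]} = 1`.
The deviation `D_I = ∑_{J ⊆ I} (-1)^{|I \ J|} e_J` is the Möbius transform of `S ↦ e_S` on the
Boolean lattice. Möbius inversion gives `∑_{I ⊆ S} D_I = e_S`, in particular `∑_I D_I = 1`, and
the meet-multiplicativity gives `e_S D_I = D_I` or `0` according as `I ⊆ S` or not, whence the
`D_I` are orthogonal idempotents. A complete family of orthogonal idempotents splits `F(⊕ M_i)`
into the direct sum of their images.
-/

open Finset CategoryTheory ZeroObject DirectSum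

/-- The deviation of a functor `F` along a finite family of parallel morphisms. -/
noncomputable def functorDeviation {R : Type} [Ring R]
    (F : ModuleCat R ⥤ ModuleCat R) {M N : ModuleCat R}
    {ι : Type} [Fintype ι] [DecidableEq ι] (f : ι → (M ⟶ N)) :
    F.obj M ⟶ F.obj N :=
  ∑ I ∈ (univ : Finset ι).powerset,
    (-1 : ℤ) ^ (Fintype.card ι - I.card) • F.map (∑ i ∈ I, f i)

namespace Finset

variable {ι : Type*} [DecidableEq ι] {s t : Finset ι}

theorem sum_powerset_sdiff_neg_one_pow_card (hst : s ⊆ t) :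
    ∑ u ∈ (t \ s).powerset, (-1 : ℤ) ^ #u = if s = t then 1 else 0 := by
  rw [sum_powerset_neg_one_pow_card]
  exact if_congr (sdiff_eq_empty_iff_subset.trans ⟨(subset_antisymm hst ·), (· ▸ subset_rfl)⟩)
    rfl rfl

theorem sum_Icc_neg_one_pow_card_sdiff_left (s t : Finset ι) :
    ∑ u ∈ Icc s t, (-1 : ℤ) ^ #(u \ s) = if s = t then 1 else 0 := by
  by_cases hst : s ⊆ t
  · rw [← sum_powerset_sdiff_neg_one_pow_card hst]
    refine sum_nbij' (· \ s) (· ∪ s) ?_ ?_ ?_ ?_ fun _ _ => rfl <;> intro u hu <;>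
      simp only [mem_Icc, mem_powerset] at hu ⊢
    · exact sdiff_subset_sdiff hu.2 subset_rfl
    · exact ⟨subset_union_right, union_subset (hu.trans sdiff_subset) hst⟩
    · exact sdiff_union_of_subset hu.1
    · exact union_sdiff_cancel_right (disjoint_of_subset_left hu disjoint_sdiff_self_left)
  · rw [Icc_eq_empty hst, sum_empty, if_neg fun h => hst h.le]

theorem sum_Icc_neg_one_pow_card_sdiff_right (s t : Finset ι) :
    ∑ u ∈ Icc s t, (-1 : ℤ) ^ #(t \ u) = if s = t then 1 else 0 := by
  by_cases hst : s ⊆ t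
  · rw [← sum_powerset_sdiff_neg_one_pow_card hst]
    refine sum_nbij' (t \ ·) (t \ ·) ?_ ?_ ?_ ?_ fun _ _ => rfl <;> intro u hu <;>
      simp only [mem_Icc, mem_powerset] at hu ⊢
    · exact sdiff_subset_sdiff subset_rfl hu.1
    · exact ⟨subset_sdiff.2 ⟨hst, (disjoint_of_subset_left hu disjoint_sdiff_self_left).symm⟩,
        sdiff_subset⟩
    · exact sdiff_sdiff_eq_self hu.2
    · exact sdiff_sdiff_eq_self (hu.trans sdiff_subset)
  · rw [Icc_eq_empty hst, sum_empty, if_neg fun h => hst h.le]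

theorem sum_powerset_univ_map_subtype {β : Type*} [AddCommMonoid β] (I : Finset ι)
    (g : Finset ι → β) :
    ∑ J ∈ (univ : Finset I).powerset, g (J.map (Function.Embedding.subtype _)) =
      ∑ J ∈ I.powerset, g J := by
  refine sum_nbij' (·.map (Function.Embedding.subtype _)) (·.subtype (· ∈ I))
    (fun J _ => mem_powerset.2 (map_subtype_subset J)) (fun J _ => mem_powerset.2 (subset_univ _))
    (fun J _ => ?_) (fun J hJ => subtype_map_of_mem (mem_powerset.1 hJ)) fun _ _ => rfl
  ext x
  simp

end Finset

section Deviation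

variable {ι : Type*} [DecidableEq ι]

section AddCommGroup

variable {G : Type*} [AddCommGroup G]

def deviation (g : Finset ι → G) (I : Finset ι) : G :=
  ∑ J ∈ I.powerset, (-1 : ℤ) ^ #(I \ J) • g J

theorem deviation_congr {g g' : Finset ι → G} {I : Finset ι} (h : ∀ J ⊆ I, g J = g' J) :
    deviation g I = deviation g' I :=
  sum_congr rfl fun J hJ => by rw [h J (mem_powerset.1 hJ)]

theorem map_deviation {H F : Type*} [AddCommGroup H] [FunLike F G H] [AddMonoidHomClass F G H]
    (φ : F) (g : Finset ι → G) (I : Finset ι) :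
    φ (deviation g I) = deviation (fun J => φ (g J)) I := by
  simp only [deviation, map_sum, map_zsmul]

theorem deviation_insert (g : Finset ι → G) {a : ι} {I : Finset ι} (ha : a ∉ I) :
    deviation g (insert a I) = deviation (fun J => g (insert a J)) I - deviation g I := by
  rw [deviation, sum_powerset_insert ha, deviation, deviation, sub_eq_add_neg, add_comm,
    ← sum_neg_distrib]
  congr 1 <;> refine sum_congr rfl fun J hJ => ?_
  · rw [insert_sdiff_insert, sdiff_insert_of_notMem ha]
  · have haJ : a ∉ J := fun h => ha (mem_powerset.1 hJ h)
    rw [insert_sdiff_of_notMem _ haJ, card_insert_of_notMem (by simp [ha]), pow_succ, mul_neg_one,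
      neg_smul]

theorem sum_powerset_deviation (g : Finset ι → G) (S : Finset ι) :
    ∑ I ∈ S.powerset, deviation g I = g S := by
  simp only [deviation]
  rw [sum_comm' (t' := S.powerset) (s' := (Icc · S)) fun I J => by
    simp only [mem_powerset, mem_Icc]
    exact ⟨fun ⟨hIS, hJI⟩ => ⟨⟨hJI, hIS⟩, hJI.trans hIS⟩, fun ⟨⟨hJI, hIS⟩, _⟩ => ⟨hIS, hJI⟩⟩]
  simp only [← sum_smul, sum_Icc_neg_one_pow_card_sdiff_left, ite_smul, one_smul, zero_smul]
  exact sum_ite_eq_of_mem' _ _ _ (mem_powerset_self S)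

end AddCommGroup

section Ring

variable {A : Type*} [Ring A] {e : Finset ι → A}

theorem deviation_const_mul (c : A) (g : Finset ι → A) (I : Finset ι) :
    deviation (fun J => c * g J) I = c * deviation g I := by
  simp only [deviation, mul_sum, mul_smul_comm]

theorem deviation_mul_const (g : Finset ι → A) (c : A) (I : Finset ι) :
    deviation (fun J => g J * c) I = deviation g I * c := by
  simp only [deviation, sum_mul, smul_mul_assoc]

variable (he : ∀ S T, e S * e T = e (S ∩ T))
include he

theorem mul_deviation (S I : Finset ι) :
    e S * deviation e I = if I ⊆ S then deviation e I else 0 := by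
  rw [← deviation_const_mul]
  split_ifs with hIS
  · exact deviation_congr fun J hJ => by rw [he, inter_eq_right.2 (hJ.trans hIS)]
  · -- for `a ∈ I \ S`, multiplying by `e S` forgets `a`, so the two halves of the deviation agree
    obtain ⟨a, haI, haS⟩ := not_subset.1 hIS
    rw [← insert_erase haI, deviation_insert _ (notMem_erase a I), sub_eq_zero]
    refine deviation_congr fun J _ => ?_
    rw [he, he, inter_insert_of_notMem haS]

theorem deviation_mul_deviation (I I' : Finset ι) :
    deviation e I * deviation e I' = if I = I' then deviation e I else 0 := by
  -- only the terms `I' ⊆ J ⊆ I` survive, and their signs cancel unless `I' = I`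
  rw [← deviation_mul_const]
  simp only [mul_deviation he]
  rw [deviation]
  simp only [smul_ite, smul_zero]
  rw [← sum_filter, ← Icc_eq_filter_powerset, ← sum_smul, sum_Icc_neg_one_pow_card_sdiff_right,
    ite_smul, one_smul, zero_smul]
  obtain rfl | hne := eq_or_ne I I'
  · rfl
  · rw [if_neg hne.symm, if_neg hne]

theorem completeOrthogonalIdempotents_deviation [Fintype ι] (h1 : e univ = 1) :
    CompleteOrthogonalIdempotents (deviation e) where
  toOrthogonalIdempotents := OrthogonalIdempotents.iff_mul_eq.2 (deviation_mul_deviation he)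
  complete := by rw [← powerset_univ, sum_powerset_deviation, h1]

end Ring

end Deviation

theorem OrthogonalIdempotents.sum_mul_sum {R ι : Type*} [Ring R] [DecidableEq ι] {e : ι → R}
    (he : OrthogonalIdempotents e) (S T : Finset ι) :
    (∑ i ∈ S, e i) * ∑ i ∈ T, e i = ∑ i ∈ S ∩ T, e i := by
  rw [sum_mul, ← sum_ite_mem]
  refine sum_congr rfl fun i _ => ?_
  split_ifs with hi
  · exact he.mul_sum_of_mem hi
  · exact he.mul_sum_of_notMem hi

theorem LinearMap.completeOrthogonalIdempotents_single_comp_proj (R : Type*) {ι : Type*}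
    [Semiring R] [Fintype ι] [DecidableEq ι] (φ : ι → Type*) [∀ i, AddCommMonoid (φ i)]
    [∀ i, Module R (φ i)] :
    CompleteOrthogonalIdempotents fun i => (single R φ i ∘ₗ proj i : Module.End R (∀ i, φ i)) where
  idem i := by ext x j; simp
  ortho i j hij := by ext x l; simp [hij]
  complete := by ext x j; simp

namespace CompleteOrthogonalIdempotents

variable {R N ι : Type*} [Ring R] [AddCommGroup N] [Module R N] [Fintype ι] [DecidableEq ι]
  {e : ι → Module.End R N}

noncomputable def linearEquivDirectSumRange (he : CompleteOrthogonalIdempotents e) :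
    N ≃ₗ[R] ⨁ i, LinearMap.range (e i) :=
  LinearEquiv.ofLinearMap (∑ i, DirectSum.lof R ι _ i ∘ₗ (e i).rangeRestrict)
    (DirectSum.coeLinearMap _) (by
      refine DirectSum.linearMap_ext R fun i => LinearMap.ext fun ⟨_, x, rfl⟩ => ?_
      simp only [LinearMap.comp_apply, DirectSum.coeLinearMap_lof, LinearMap.sum_apply,
        LinearMap.id_comp]
      rw [sum_eq_single i (fun j _ hji => ?_) (absurd (mem_univ i))]
      · congr 1
        exact Subtype.ext (LinearMap.congr_fun (he.idem i) x)
      · have : e j (e i x) = 0 := LinearMap.congr_fun (he.ortho hji) x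
        rw [show (e j).rangeRestrict (e i x) = 0 from Subtype.ext this, map_zero]) (by
      ext x
      simpa using LinearMap.congr_fun he.complete x)

end CompleteOrthogonalIdempotents

theorem functorDeviation_subtype {R : Type} [Ring R] (F : ModuleCat R ⥤ ModuleCat R)
    {M N : ModuleCat R} {ι : Type} [DecidableEq ι] (f : ι → (M ⟶ N)) (I : Finset ι) :
    functorDeviation F (fun i : I => f i) = deviation (fun J => F.map (∑ i ∈ J, f i)) I := by
  rw [functorDeviation, deviation, ← sum_powerset_univ_map_subtype I]
  refine sum_congr rfl fun J _ => ?_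
  have hJI : J.map (Function.Embedding.subtype (· ∈ I)) ⊆ I := map_subtype_subset J
  rw [sum_map J _ f, card_sdiff_of_subset hJI, card_map, Fintype.card_coe]
  rfl

theorem cross_effect_decomposition_general {R : Type} [Ring R]
    (F : ModuleCat R ⥤ ModuleCat R)
    (k : ℕ) (M : Fin k → ModuleCat R) :
    let T : ModuleCat R := ModuleCat.of R (∀ i, M i)
    let π : Fin k → (T ⟶ T) := fun i =>
      ModuleCat.ofHom ((LinearMap.single R (fun i => M i) i).comp (LinearMap.proj i))
    Nonempty ((F.obj T) ≃ₗ[R]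
      DirectSum (Finset (Fin k)) (fun I =>
        LinearMap.range (functorDeviation F (fun i : ↥I => π ↑i)).hom)) := by
  intro T π
  have hπ : CompleteOrthogonalIdempotents (R := End T) π := by
    rw [← CompleteOrthogonalIdempotents.map_injective_iff (ModuleCat.endRingEquiv T).toRingHom
      (ModuleCat.endRingEquiv T).injective]
    exact LinearMap.completeOrthogonalIdempotents_single_comp_proj R _
  let Φ : End T →* Module.End R (F.obj T) :=
    (ModuleCat.endRingEquiv (F.obj T)).toMonoidHom.comp (F.mapEnd T)
  let e : Finset (Fin k) → Module.End R (F.obj T) := fun S => Φ (∑ i ∈ S, π i)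
  have he : ∀ S S', e S * e S' = e (S ∩ S') := fun S S' => by
    rw [← map_mul, hπ.sum_mul_sum]
  have he_univ : e univ = 1 := by
    rw [← map_one Φ, ← hπ.complete]
  have hdev : ∀ I, deviation e I = (functorDeviation F fun i : I => π i).hom := fun I => by
    rw [functorDeviation_subtype, ← ModuleCat.homAddEquiv_apply, map_deviation]
    rfl
  have hD : CompleteOrthogonalIdempotents fun I : Finset (Fin k) =>
      (functorDeviation F fun i : I => π i).hom :=
    funext hdev ▸ completeOrthogonalIdempotents_deviation he he_univ
  exact ⟨hD.linearEquivDirectSumRange⟩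

/-- Cross-effect decomposition: for a functor `F` on finitely generated
free modules with `F(0) = 0`, and modules `M₁,…,M_k`, one has
`F(M₁ ⊕ ⋯ ⊕ M_k) ≅ ⊕_{I ⊆ [k]} cr_I F`, where `cr_I F` is the image of the deviation
of the canonical projections indexed by `I`. -/
theorem cross_effect_decomposition {R : Type} [Ring R]
    (F : ModuleCat R ⥤ ModuleCat R) (hF : CategoryTheory.Limits.IsZero (F.obj 0))
    (k : ℕ) (M : Fin k → ModuleCat R)
    [∀ i, Module.Free R (M i)] [∀ i, Module.Finite R (M i)] :
    let T : ModuleCat R := ModuleCat.of R (∀ i, M i)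
    let π : Fin k → (T ⟶ T) := fun i =>
      ModuleCat.ofHom ((LinearMap.single R (fun i => M i) i).comp (LinearMap.proj i))
    Nonempty ((F.obj T) ≃ₗ[R]
      DirectSum (Finset (Fin k)) (fun I =>
        LinearMap.range (functorDeviation F (fun i : ↥I => π ↑i)).hom)) :=
  cross_effect_decomposition_general F k M
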